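/- For every real number d with 2/√5 ≤ d ≤ 1, the lattice L_d can be covered by closed unit disks with pairwise disjoint interiors. -/

import Mathlib

/-- The square lattice `(dℤ) × (dℤ)` in the Euclidean plane. -/
def squareLattice (d : ℝ) : Set (EuclideanSpace ℝ (Fin 2)) :=
  {p | ∃ m n : ℤ, p 0 = d * m ∧ p 1 = d * n}

/-- A set `S ⊆ ℝ²` is coverable by closed unit disks with pairwise disjoint interiors:
there is a family of centers with pairwise distances at least `2` such that `S` is
contained in the union of the closed unit balls about the centers. -/
def CoverableByUnitDisks (S : Set (EuclideanSpace ℝ (Fin 2))) : Prop :=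
  ∃ (ι : Type) (c : ι → EuclideanSpace ℝ (Fin 2)),
    (∀ i j, i ≠ j → 2 ≤ dist (c i) (c j)) ∧
    S ⊆ ⋃ i, Metric.closedBall (c i) 1


/-!
Place the disk centers at the `d`-multiples of the sublattice `Λ ⊆ ℤ²` spanned by `(2, 1)` and
`(-1, 2)`. Distinct points of `Λ` are at distance at least `√5`, so the centers are at distance
at least `√5 d ≥ 2`. The translates of the plus pentomino `{0, ±e₁, ±e₂}` by `Λ` tile `ℤ²`, so
every point of `L_d` is within `d ≤ 1` of a center.
-/

noncomputable def plusTileCenter (d : ℝ) (u : ℤ × ℤ) : EuclideanSpace ℝ (Fin 2) :=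
  !₂[d * (2 * u.1 - u.2), d * (u.1 + 2 * u.2)]

lemma exists_eq_of_five_dvd {x y : ℤ} (h : 5 ∣ 2 * x + y) :
    ∃ a b : ℤ, x = 2 * a - b ∧ y = a + 2 * b :=
  ⟨(2 * x + y) / 5, (2 * y - x) / 5, by omega⟩

-- The values `2u + v` on the plus pentomino are `0, ±1, ±2`: a full residue system mod 5.
lemma exists_sq_add_sq_le_one_five_dvd (k : ℤ) :
    ∃ u v : ℤ, u ^ 2 + v ^ 2 ≤ 1 ∧ 5 ∣ k - (2 * u + v) := by
  have : k % 5 = 0 ∨ k % 5 = 1 ∨ k % 5 = 2 ∨ k % 5 = 3 ∨ k % 5 = 4 := by omega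
  rcases this with h | h | h | h | h
  · exact ⟨0, 0, by norm_num, by omega⟩
  · exact ⟨0, 1, by norm_num, by omega⟩
  · exact ⟨1, 0, by norm_num, by omega⟩
  · exact ⟨-1, 0, by norm_num, by omega⟩
  · exact ⟨0, -1, by norm_num, by omega⟩

lemma exists_plusTile (m n : ℤ) :
    ∃ a b : ℤ, (m - (2 * a - b)) ^ 2 + (n - (a + 2 * b)) ^ 2 ≤ 1 := by
  obtain ⟨u, v, huv, hdvd⟩ := exists_sq_add_sq_le_one_five_dvd (2 * m + n)
  obtain ⟨a, b, ha, hb⟩ := exists_eq_of_five_dvd (x := m - u) (y := n - v) (by omega)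
  exact ⟨a, b, by rwa [← ha, ← hb, sub_sub_cancel, sub_sub_cancel]⟩

lemma one_le_sq_add_sq_of_ne {u v : ℤ × ℤ} (h : u ≠ v) :
    1 ≤ (u.1 - v.1) ^ 2 + (u.2 - v.2) ^ 2 := by
  rcases u with ⟨a, b⟩
  rcases v with ⟨a', b'⟩
  have : a ≠ a' ∨ b ≠ b' := by
    by_contra! hab
    exact h (by rw [hab.1, hab.2])
  rcases this with h | h
  · nlinarith [sq_nonneg (b - b'), Int.one_le_abs (sub_ne_zero.mpr h), sq_abs (a - a')]
  · nlinarith [sq_nonneg (a - a'), Int.one_le_abs (sub_ne_zero.mpr h), sq_abs (b - b')]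

lemma dist_sq_eq_fin_two (p q : EuclideanSpace ℝ (Fin 2)) :
    dist p q ^ 2 = (p 0 - q 0) ^ 2 + (p 1 - q 1) ^ 2 := by
  rw [PiLp.dist_sq_eq_of_L2, Fin.sum_univ_two, Real.dist_eq, Real.dist_eq, sq_abs, sq_abs]

lemma dist_sq_plusTileCenter (d : ℝ) (u v : ℤ × ℤ) :
    dist (plusTileCenter d u) (plusTileCenter d v) ^ 2 =
      5 * d ^ 2 * (((u.1 - v.1 : ℤ) : ℝ) ^ 2 + ((u.2 - v.2 : ℤ) : ℝ) ^ 2) := by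
  simp only [dist_sq_eq_fin_two, plusTileCenter, Matrix.cons_val_zero, Matrix.cons_val_one,
    Matrix.cons_val_fin_one, Int.cast_sub]
  ring

lemma two_le_dist_plusTileCenter {d : ℝ} (hd : 4 ≤ 5 * d ^ 2) {u v : ℤ × ℤ} (h : u ≠ v) :
    2 ≤ dist (plusTileCenter d u) (plusTileCenter d v) := by
  have hsep : (1 : ℝ) ≤ ((u.1 - v.1 : ℤ) : ℝ) ^ 2 + ((u.2 - v.2 : ℤ) : ℝ) ^ 2 := by
    exact_mod_cast one_le_sq_add_sq_of_ne h
  have h4 : 4 ≤ dist (plusTileCenter d u) (plusTileCenter d v) ^ 2 := by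
    rw [dist_sq_plusTileCenter]
    nlinarith
  nlinarith [dist_nonneg (x := plusTileCenter d u) (y := plusTileCenter d v)]

lemma squareLattice_subset_iUnion_closedBall_plusTileCenter {d : ℝ} (hd : d ^ 2 ≤ 1) :
    squareLattice d ⊆ ⋃ u, Metric.closedBall (plusTileCenter d u) 1 := by
  rintro p ⟨m, n, hp0, hp1⟩
  obtain ⟨a, b, hab⟩ := exists_plusTile m n
  have hab' : ((m : ℝ) - (2 * a - b)) ^ 2 + ((n : ℝ) - (a + 2 * b)) ^ 2 ≤ 1 := by
    exact_mod_cast hab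
  refine Set.mem_iUnion.2 ⟨(a, b), ?_⟩
  rw [Metric.mem_closedBall, ← sq_le_one_iff₀ dist_nonneg, dist_sq_eq_fin_two]
  simp only [plusTileCenter, hp0, hp1, Matrix.cons_val_zero, Matrix.cons_val_one,
    Matrix.cons_val_fin_one]
  nlinarith [sq_nonneg d]

theorem lattice_coverable_interval5 (d : ℝ)
    (hd : d ∈ Set.Icc (2 / Real.sqrt 5) 1) :
    CoverableByUnitDisks (squareLattice d) := by
  obtain ⟨hd_lower, hd_upper⟩ := hd
  have hd_pos : 0 < d := lt_of_lt_of_le (by positivity) hd_lower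
  have hpack : 4 ≤ 5 * d ^ 2 := by
    have h2 : 2 ≤ d * √5 := (div_le_iff₀ (by positivity)).1 hd_lower
    have h5 : (d * √5) ^ 2 = 5 * d ^ 2 := by
      rw [mul_pow, Real.sq_sqrt (by norm_num)]
      ring
    nlinarith
  have hcover : d ^ 2 ≤ 1 := pow_le_one₀ hd_pos.le hd_upper
  exact ⟨ℤ × ℤ, plusTileCenter d, fun _ _ h => two_le_dist_plusTileCenter hpack h,
    squareLattice_subset_iUnion_closedBall_plusTileCenter hcover⟩
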